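/- Let C be a trigonometric curve with minimal polynomial μ. Then the set {r ∈ [0,1)² : μ(r) = 0 and ∇μ(r) = 0} is finite; that is, the gradient of μ vanishes at only finitely many points of C. -/

import Mathlib

open MeasureTheory Set

noncomputable section

/-- The unit square `[0,1]²`. -/
def box : Set (ℝ × ℝ) := Set.Icc (0:ℝ) 1 ×ˢ Set.Icc (0:ℝ) 1

/-- Data of a trigonometric polynomial with frequencies on a shifted lattice `ℤ² + σ`,
`σ ∈ {0, 1/2}²`. -/
structure STP where
  σ : ℝ × ℝ
  hσ1 : σ.1 = 0 ∨ σ.1 = 1/2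
  hσ2 : σ.2 = 0 ∨ σ.2 = 1/2
  Λ : Finset (ℤ × ℤ)
  c : ℤ × ℤ → ℂ

/-- The function `r ↦ ∑_{k ∈ Λ} c[k] e^{2πi (k+σ)·r}`. -/
def STP.toFun (p : STP) : ℝ × ℝ → ℂ := fun r =>
  ∑ k ∈ p.Λ, p.c k * Complex.exp (2 * Real.pi * Complex.I *
    (((k.1 : ℂ) + (p.σ.1 : ℂ)) * (r.1 : ℂ) + ((k.2 : ℂ) + (p.σ.2 : ℂ)) * (r.2 : ℂ)))

/-- Frequency support: the indices with nonzero coefficient. -/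
def STP.freqSupp (p : STP) : Finset (ℤ × ℤ) := p.Λ.filter fun k => p.c k ≠ 0

/-- The degree: side lengths of the smallest closed rectangle containing the frequency
support (the shift `σ` does not affect side lengths). -/
def STP.deg (p : STP) : ℤ × ℤ :=
  ((WithBot.unbotD 0 ((p.freqSupp.image Prod.fst).max)) - (WithTop.untopD 0 ((p.freqSupp.image Prod.fst).min)),
   (WithBot.unbotD 0 ((p.freqSupp.image Prod.snd).max)) - (WithTop.untopD 0 ((p.freqSupp.image Prod.snd).min)))

/-- The zero set of `p` in `[0,1]²`. -/
def STP.zeroSet (p : STP) : Set (ℝ × ℝ) := {r | r ∈ box ∧ p.toFun r = 0}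

/-- `γ` divides `μ` among (shifted-lattice) trigonometric polynomials. -/
def DividesS (γ μ : ℝ × ℝ → ℂ) : Prop :=
  ∃ η : STP, η.toFun ≠ 0 ∧ μ = fun r => γ r * η.toFun r

/-- `C` is a trigonometric curve: the zero set in `[0,1]²` of a trigonometric polynomial,
infinite and with no isolated points. -/
def IsTrigCurveS (C : Set (ℝ × ℝ)) : Prop :=
  (∃ p : STP, p.toFun ≠ 0 ∧ C = p.zeroSet) ∧ C.Infinite ∧
    ∀ x ∈ C, AccPt x (Filter.principal C)

/-- `p` is a minimal polynomial of the trigonometric curve `C`: real-valued, with zero set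
`C`, dividing every trigonometric polynomial that vanishes on `C`. -/
def IsMinPolyS (p : STP) (C : Set (ℝ × ℝ)) : Prop :=
  p.toFun ≠ 0 ∧ (∀ r, (p.toFun r).im = 0) ∧ C = p.zeroSet ∧
    ∀ q : STP, q.toFun ≠ 0 → (∀ r ∈ C, q.toFun r = 0) → DividesS p.toFun q.toFun

/-- Partial derivative in the `x` direction. -/
def pderivX (F : ℝ × ℝ → ℂ) (r : ℝ × ℝ) : ℂ := fderiv ℝ F r (1, 0)

/-- Partial derivative in the `y` direction. -/
def pderivY (F : ℝ × ℝ → ℂ) (r : ℝ × ℝ) : ℂ := fderiv ℝ F r (0, 1)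

/-!
Substituting `z = 𝐞 x`, `w = 𝐞 y` turns a trigonometric polynomial into a character times a
polynomial `P(z, w)`; write `P = w^β F` with `w ∤ F`. Minimality of `μ` says that, up to a monomial,
`F` divides every polynomial vanishing on its zeros in the torus, so `s² ∣ F` forces `s` to divide a
monomial. This excludes `(z - u)² ∣ F` for `u ≠ 0`, which bounds the singular points of `F = 0` on
each line `z = u`, and it excludes squared prime factors of positive `w`-degree, so `F` is
squarefree over `ℂ(z)` and a Bézout relation `a F + b ∂F/∂w = d(z)` with `d ≠ 0` leaves finitely
many possible `z`. Critical points of `μ` in `[0,1)²` are sent injectively to singular points.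
-/

open Polynomial Polynomial.Bivariate

def expTwoPiI (t : ℝ) : ℂ := Complex.exp (2 * Real.pi * Complex.I * t)

local notation "𝐞" => expTwoPiI

section expTwoPiI

lemma expTwoPiI_ne_zero (t : ℝ) : 𝐞 t ≠ 0 := Complex.exp_ne_zero _

lemma expTwoPiI_add (s t : ℝ) : 𝐞 (s + t) = 𝐞 s * 𝐞 t := by
  simp only [expTwoPiI, ← Complex.exp_add]
  push_cast
  ring_nf

lemma expTwoPiI_int_mul (n : ℤ) (t : ℝ) : 𝐞 (n * t) = 𝐞 t ^ n := by
  simp only [expTwoPiI, ← Complex.exp_int_mul]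
  push_cast
  ring_nf

lemma expTwoPiI_eq_one_iff (t : ℝ) : 𝐞 t = 1 ↔ ∃ n : ℤ, t = n := by
  have h2πI : 2 * Real.pi * Complex.I ≠ 0 := by simp [Real.pi_ne_zero]
  simp only [expTwoPiI, Complex.exp_eq_one_iff]
  constructor
  · rintro ⟨n, hn⟩
    exact ⟨n, by exact_mod_cast mul_left_cancel₀ h2πI (hn.trans (mul_comm _ _))⟩
  · rintro ⟨n, rfl⟩
    exact ⟨n, by push_cast; ring⟩

lemma expTwoPiI_add_one (t : ℝ) : 𝐞 (t + 1) = 𝐞 t := by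
  rw [expTwoPiI_add, (expTwoPiI_eq_one_iff 1).mpr ⟨1, by simp⟩, mul_one]

lemma injOn_expTwoPiI : InjOn 𝐞 (Ico 0 1) := by
  intro s hs t ht hst
  obtain ⟨n, hn⟩ := (expTwoPiI_eq_one_iff (s - t)).mp <| by
    rw [sub_eq_add_neg, expTwoPiI_add, hst, ← expTwoPiI_add, add_neg_cancel, expTwoPiI,
      Complex.ofReal_zero, mul_zero, Complex.exp_zero]
  have : n = 0 := by
    have h₁ : (n : ℝ) < 1 := by linarith [hs.1, hs.2, ht.1, ht.2]
    have h₂ : (-1 : ℝ) < n := by linarith [hs.1, hs.2, ht.1, ht.2]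
    norm_cast at h₁ h₂
    omega
  simpa [this, sub_eq_zero] using hn

lemma infinite_range_expTwoPiI : (range 𝐞).Infinite :=
  ((Ico_infinite zero_lt_one).image injOn_expTwoPiI).mono (image_subset_range _ _)

lemma expTwoPiI_mul_eq_mul_pow {n : ℤ} {M : ℕ} (hn : n.natAbs ≤ M) (σ x : ℝ) :
    𝐞 ((n + σ) * x) = 𝐞 ((σ - M) * x) * 𝐞 x ^ (n + M).toNat := by
  have hnM : (((n + M).toNat : ℤ) : ℝ) = n + M := by
    rw [Int.toNat_of_nonneg (by omega)]; push_cast; rfl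
  rw [← zpow_natCast, ← expTwoPiI_int_mul, hnM, ← expTwoPiI_add]
  ring_nf

lemma hasDerivAt_expTwoPiI_mul (c t : ℝ) :
    HasDerivAt (fun s => 𝐞 (c * s)) (2 * Real.pi * Complex.I * c * 𝐞 (c * t)) t := by
  have := (((hasDerivAt_id t).const_mul c).ofReal_comp.const_mul (2 * Real.pi * Complex.I)).cexp
  convert this using 1
  · ext s; simp only [expTwoPiI, Complex.ofReal_mul, id_eq]
  · simp only [expTwoPiI, Complex.ofReal_mul, id_eq, mul_one]; ring

end expTwoPiI

lemma pow_toNat_neg_mul_zpow {G₀ : Type*} [GroupWithZero G₀] {u : G₀} (hu : u ≠ 0) (m : ℤ) :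
    u ^ (-m).toNat * u ^ m = u ^ m.toNat := by
  rw [← zpow_natCast, ← zpow_natCast, ← zpow_add₀ hu]
  congr 1
  omega

namespace Polynomial

section Bivariate

variable {R : Type*} [CommRing R]

lemma map_evalRingHom_eq_zero_iff (p : R[X][Y]) (x : R) :
    p.map (evalRingHom x) = 0 ↔ C (X - C x) ∣ p := by
  simp only [C_dvd_iff_dvd_coeff, Polynomial.ext_iff, coeff_map, coeff_zero, coe_evalRingHom,
    dvd_iff_isRoot, IsRoot.def]

lemma eq_zero_of_evalEval_eq_zero [IsDomain R] {s t : Set R} (hs : s.Infinite) (ht : t.Infinite)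
    (p : R[X][Y]) (h : ∀ x ∈ s, ∀ y ∈ t, p.evalEval x y = 0) : p = 0 := by
  have hmap (x) (hx : x ∈ s) : p.map (evalRingHom x) = 0 :=
    eq_zero_of_infinite_isRoot _ <| ht.mono fun y hy =>
      (map_evalRingHom_eval x y p).trans (h x hx y hy)
  ext j
  rw [coeff_zero, eq_zero_of_infinite_isRoot (p.coeff j) (hs.mono fun x hx => ?_), coeff_zero]
  simpa using congr_arg (coeff · j) (hmap x hx)

end Bivariate

section FractionField

variable {R K : Type*} [CommRing R] [Field K] [Algebra R K] [IsFractionRing R K]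

lemma exists_mul_add_mul_derivative_eq_C {f : R[X]} (hf : (f.map (algebraMap R K)).Separable) :
    ∃ a b : R[X], ∃ d : R, d ≠ 0 ∧ f * a + derivative f * b = C d := by
  have hinj := IsFractionRing.injective R K
  by_cases hdeg : f.natDegree = 0
  · refine ⟨1, 0, f.coeff 0, fun h0 => not_separable_zero (R := K) ?_, ?_⟩
    · rwa [eq_C_of_natDegree_eq_zero hdeg, h0, map_zero, Polynomial.map_zero] at hf
    · rw [mul_one, mul_zero, add_zero, ← eq_C_of_natDegree_eq_zero hdeg]
  obtain ⟨a, b, -, -, hab⟩ :=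
    exists_mul_add_mul_eq_C_resultant f (derivative f) le_rfl le_rfl (Or.inl hdeg)
  refine ⟨a, b, _, fun h0 => ?_, hab⟩
  have hres := resultant_map_map f (derivative f) f.natDegree (derivative f).natDegree
    (algebraMap R K)
  rw [h0, map_zero, ← natDegree_map_eq_of_injective hinj f,
    ← natDegree_map_eq_of_injective hinj (derivative f), ← derivative_map] at hres
  exact (resultant_eq_zero_iff.mp hres).2 hf

variable [IsDomain R] [NormalizedGCDMonoid R] [UniqueFactorizationMonoid R]

/-- Gauss's lemma turns a repeated factor over `K` into a repeated prime factor over `R`. -/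
lemma exists_prime_mul_self_dvd_of_not_squarefree_map {f : R[X]} (hf : f ≠ 0)
    (h : ¬Squarefree (f.map (algebraMap R K))) :
    ∃ π : R[X], Prime π ∧ 0 < π.natDegree ∧ π * π ∣ f := by
  obtain ⟨q, hqf, hq⟩ : ∃ q, q * q ∣ f.map (algebraMap R K) ∧ ¬IsUnit q := by
    simpa [Squarefree] using h
  have hq0 : q ≠ 0 := by
    rintro rfl
    exact hf (map_injective _ (IsFractionRing.injective R K) (by simpa using hqf))
  set g := IsLocalization.integerNormalization (nonZeroDivisors R) q
  set q₀ := g.primPart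
  have hq₀ : q₀.IsPrimitive := isPrimitive_primPart g
  have hq₀q : q₀.map (algebraMap R K) ∣ q := by
    obtain ⟨b, hb0, hb⟩ := IsLocalization.integerNormalization_spec (nonZeroDivisors R) q
    have hbq : C (algebraMap R K b) * q =
        C (algebraMap R K g.content) * q₀.map (algebraMap R K) := by
      rw [← smul_eq_C_mul, algebraMap_smul, ← hb, ← map_C, ← Polynomial.map_mul,
        ← eq_C_content_mul_primPart]
    refine (IsUnit.dvd_mul_left (isUnit_C.mpr (isUnit_iff_ne_zero.mpr ?_))).mp
      ⟨C (algebraMap R K g.content), by rw [hbq, mul_comm]⟩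
    exact (map_ne_zero_iff _ (IsFractionRing.injective R K)).mpr (nonZeroDivisors.ne_zero hb0)
  have hq₀f : q₀ * q₀ ∣ f := (hq₀.mul hq₀).dvd_of_fraction_map_dvd_fraction_map (K := K)
    (by rw [Polynomial.map_mul]; exact (mul_dvd_mul hq₀q hq₀q).trans hqf)
  obtain ⟨π, hπ, hπq₀⟩ := WfDvdMonoid.exists_irreducible_factor
    (fun hu => hq (isUnit_or_eq_zero_of_isUnit_integerNormalization_primPart hq0 hu)) hq₀.ne_zero
  refine ⟨π, hπ.prime, Nat.pos_of_ne_zero fun hdeg => hπ.not_isUnit ?_,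
    (mul_dvd_mul hπq₀ hπq₀).trans hq₀f⟩
  rw [eq_C_of_natDegree_eq_zero hdeg] at hπq₀ ⊢
  exact isUnit_C.mpr (hq₀ _ hπq₀)

end FractionField

end Polynomial

lemma eq_of_evalEval_expTwoPiI_eq {A B : ℂ[X][Y]}
    (h : ∀ x y : ℝ, A.evalEval (𝐞 x) (𝐞 y) = B.evalEval (𝐞 x) (𝐞 y)) : A = B := by
  rw [← sub_eq_zero]
  refine eq_zero_of_evalEval_eq_zero infinite_range_expTwoPiI infinite_range_expTwoPiI _ ?_
  rintro _ ⟨x, rfl⟩ _ ⟨y, rfl⟩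
  rw [evalEval_sub, h, sub_self]

/-- Periodicity in `x` and `y` forces `a, b ∈ ℤ`, so the character is a Laurent monomial. -/
lemma dvd_monomial_mul_of_evalEval_eq {A B : ℂ[X][Y]} (hB : B ≠ 0) {a b : ℝ}
    (h : ∀ x y : ℝ, A.evalEval (𝐞 x) (𝐞 y) = 𝐞 (a * x) * 𝐞 (b * y) * B.evalEval (𝐞 x) (𝐞 y)) :
    ∃ i j : ℕ, B ∣ C X ^ i * Y ^ j * A := by
  obtain ⟨x₀, y₀, hB₀⟩ : ∃ x y : ℝ, B.evalEval (𝐞 x) (𝐞 y) ≠ 0 := by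
    by_contra! h0
    exact hB (eq_of_evalEval_expTwoPiI_eq fun x y => by rw [h0, evalEval_zero])
  have hR : 𝐞 (a * x₀) * 𝐞 (b * y₀) * B.evalEval (𝐞 x₀) (𝐞 y₀) ≠ 0 := by
    simp [expTwoPiI_ne_zero, hB₀]
  obtain ⟨m, rfl⟩ : ∃ m : ℤ, a = m := by
    have h₁ := h (x₀ + 1) y₀
    rw [expTwoPiI_add_one, h, mul_add, mul_one, expTwoPiI_add] at h₁
    exact (expTwoPiI_eq_one_iff a).mp ((mul_eq_left₀ hR).mp (by linear_combination -h₁))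
  obtain ⟨n, rfl⟩ : ∃ n : ℤ, b = n := by
    have h₁ := h x₀ (y₀ + 1)
    rw [expTwoPiI_add_one, h, mul_add, mul_one, expTwoPiI_add] at h₁
    exact (expTwoPiI_eq_one_iff b).mp ((mul_eq_left₀ hR).mp (by linear_combination -h₁))
  refine ⟨(-m).toNat, (-n).toNat, C X ^ m.toNat * Y ^ n.toNat,
    eq_of_evalEval_expTwoPiI_eq fun x y => ?_⟩
  simp only [evalEval_mul, evalEval_pow, evalEval_C, eval_X, evalEval_X, h, expTwoPiI_int_mul]
  rw [← pow_toNat_neg_mul_zpow (expTwoPiI_ne_zero x) m,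
    ← pow_toNat_neg_mul_zpow (expTwoPiI_ne_zero y) n]
  ring

namespace STP

def offset₁ (p : STP) : ℕ := p.Λ.sup fun k => k.1.natAbs

def offset₂ (p : STP) : ℕ := p.Λ.sup fun k => k.2.natAbs

def toPoly (p : STP) : ℂ[X][Y] :=
  ∑ k ∈ p.Λ, monomial (k.2 + p.offset₂).toNat (monomial (k.1 + p.offset₁).toNat (p.c k))

lemma toFun_apply (p : STP) (x y : ℝ) :
    p.toFun (x, y) = ∑ k ∈ p.Λ, p.c k * 𝐞 ((k.1 + p.σ.1) * x) * 𝐞 ((k.2 + p.σ.2) * y) := by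
  refine Finset.sum_congr rfl fun k _ => ?_
  rw [expTwoPiI, expTwoPiI, mul_assoc (p.c k), ← Complex.exp_add]
  push_cast
  ring_nf

lemma toFun_eq_evalEval (p : STP) (x y : ℝ) :
    p.toFun (x, y) = 𝐞 ((p.σ.1 - p.offset₁) * x) * 𝐞 ((p.σ.2 - p.offset₂) * y) *
      p.toPoly.evalEval (𝐞 x) (𝐞 y) := by
  rw [toFun_apply, toPoly, evalEval_finsetSum, Finset.mul_sum]
  refine Finset.sum_congr rfl fun k hk => ?_
  have h₁ : k.1.natAbs ≤ p.offset₁ := Finset.le_sup (f := fun k : ℤ × ℤ => k.1.natAbs) hk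
  have h₂ : k.2.natAbs ≤ p.offset₂ := Finset.le_sup (f := fun k : ℤ × ℤ => k.2.natAbs) hk
  rw [expTwoPiI_mul_eq_mul_pow h₁, expTwoPiI_mul_eq_mul_pow h₂, evalEval, eval_monomial,
    eval_mul, eval_pow, eval_C, eval_monomial]
  ring

lemma toFun_eq_zero_iff (p : STP) (x y : ℝ) :
    p.toFun (x, y) = 0 ↔ p.toPoly.evalEval (𝐞 x) (𝐞 y) = 0 := by
  simp [toFun_eq_evalEval, expTwoPiI_ne_zero]

lemma toPoly_ne_zero {p : STP} (hp : p.toFun ≠ 0) : p.toPoly ≠ 0 := by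
  refine fun h0 => hp (funext fun r => ?_)
  rw [← Prod.mk.eta (p := r), toFun_eq_evalEval, h0, evalEval_zero, mul_zero, Pi.zero_apply]

end STP

def Polynomial.toSTP (G : ℂ[X][Y]) : STP where
  σ := (0, 0)
  hσ1 := Or.inl rfl
  hσ2 := Or.inl rfl
  Λ := (G.support.sigma fun j => (G.coeff j).support).image fun ji => ((ji.2 : ℤ), (ji.1 : ℤ))
  c k := (G.coeff k.2.toNat).coeff k.1.toNat

lemma Polynomial.toSTP_toFun (G : ℂ[X][Y]) (x y : ℝ) :
    G.toSTP.toFun (x, y) = G.evalEval (𝐞 x) (𝐞 y) := by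
  rw [STP.toFun_apply, toSTP, Finset.sum_image fun a _ b _ hab => by
      simp only [Prod.mk.injEq, Nat.cast_inj] at hab; exact Sigma.ext hab.2 (heq_of_eq hab.1),
    Finset.sum_sigma]
  conv_rhs => rw [G.as_sum_support_C_mul_X_pow]
  simp only [evalEval_finsetSum, evalEval_mul, evalEval_C, evalEval_pow, evalEval_X]
  refine Finset.sum_congr rfl fun j _ => ?_
  rw [eval_eq_sum, Polynomial.sum_def, Finset.sum_mul]
  refine Finset.sum_congr rfl fun i _ => ?_
  simp only [Int.toNat_natCast, add_zero]
  rw [← zpow_natCast, ← zpow_natCast, ← expTwoPiI_int_mul, ← expTwoPiI_int_mul]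

/-- `F` generates the ideal of its zero set in the torus `{(𝐞 x, 𝐞 y)}` within the Laurent ring
`ℂ[z^±1, w^±1]`, where monomials are units. -/
def IsMinimalOnTorus (F : ℂ[X][Y]) : Prop :=
  ∀ G : ℂ[X][Y], (∀ x y : ℝ, F.evalEval (𝐞 x) (𝐞 y) = 0 → G.evalEval (𝐞 x) (𝐞 y) = 0) →
    ∃ a b : ℕ, F ∣ C X ^ a * Y ^ b * G

lemma STP.isMinimalOnTorus_toPoly {p : STP}
    (hmin : ∀ q : STP, q.toFun ≠ 0 → (∀ r ∈ p.zeroSet, q.toFun r = 0) →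
      DividesS p.toFun q.toFun) :
    IsMinimalOnTorus p.toPoly := by
  intro G hG
  by_cases hG0 : G = 0
  · exact ⟨0, 0, by simp [hG0]⟩
  have hq0 : G.toSTP.toFun ≠ 0 := fun h0 => hG0 <| eq_of_evalEval_expTwoPiI_eq fun x y => by
    rw [← toSTP_toFun, h0, Pi.zero_apply, evalEval_zero]
  obtain ⟨η, hη, hGη⟩ := hmin G.toSTP hq0 fun r hr => by
    rw [← Prod.mk.eta (p := r), toSTP_toFun]
    exact hG r.1 r.2 ((p.toFun_eq_zero_iff r.1 r.2).mp hr.2)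
  have hp0 : p.toFun ≠ 0 := fun h0 => hq0 (by rw [hGη, h0]; exact funext fun r => zero_mul _)
  obtain ⟨i, j, hij⟩ := dvd_monomial_mul_of_evalEval_eq (A := G)
    (mul_ne_zero (toPoly_ne_zero hp0) (toPoly_ne_zero hη))
    (a := p.σ.1 - p.offset₁ + (η.σ.1 - η.offset₁)) (b := p.σ.2 - p.offset₂ + (η.σ.2 - η.offset₂))
    fun x y => by
      rw [← toSTP_toFun G, hGη]
      simp only [toFun_eq_evalEval, evalEval_mul, add_mul, expTwoPiI_add]
      ring
  exact ⟨i, j, (dvd_mul_right _ _).trans hij⟩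

/-- Singular points of `F = 0` off the line `z = 0`; the third condition is `∂F/∂z = 0`. -/
def singularSet (F : ℂ[X][Y]) : Set (ℂ × ℂ) :=
  {w | w.1 ≠ 0 ∧ F.evalEval w.1 w.2 = 0 ∧ (derivative (F.eval (C w.2))).eval w.1 = 0 ∧
    (derivative F).evalEval w.1 w.2 = 0}

namespace IsMinimalOnTorus

variable {F : ℂ[X][Y]}

lemma of_Y_pow_mul {β : ℕ} (h : IsMinimalOnTorus (Y ^ β * F)) : IsMinimalOnTorus F := by
  intro G hG
  refine (h G fun x y hxy => hG x y ?_).imp fun a => Exists.imp fun b =>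
    (dvd_mul_left _ _).trans
  simpa [evalEval_mul, evalEval_pow, evalEval_X, expTwoPiI_ne_zero] using hxy

lemma dvd_monomial_of_mul_self_dvd (hmin : IsMinimalOnTorus F) (hF : F ≠ 0) {s : ℂ[X][Y]}
    (hs : s * s ∣ F) : ∃ a b : ℕ, s ∣ C X ^ a * Y ^ b := by
  obtain ⟨H, rfl⟩ := hs
  have hsH : s * H ≠ 0 := fun h => hF (by rw [mul_assoc, h, mul_zero])
  obtain ⟨a, b, K, hK⟩ := hmin (s * H) fun x y hxy => by
    rw [mul_assoc, evalEval_mul, mul_eq_zero] at hxy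
    rcases hxy with h | h <;> simp [evalEval_mul, h]
  exact ⟨a, b, K, mul_right_cancel₀ hsH (by rw [hK]; ring)⟩

/-- Infinitely many singular points on the line `z = u` would make `(z - u)²` divide `F`. -/
lemma finite_singularSet_fiber (hmin : IsMinimalOnTorus F) (hF : F ≠ 0) (u : ℂ) :
    {v | (u, v) ∈ singularSet F}.Finite := by
  refine Set.not_infinite.mp fun hinf => ?_
  obtain ⟨_, hu, -⟩ := hinf.nonempty
  obtain ⟨Q, rfl⟩ := (map_evalRingHom_eq_zero_iff F u).mp <| eq_zero_of_infinite_isRoot _ <|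
    hinf.mono fun v hv => (map_evalRingHom_eval u v _).trans hv.2.1
  have hQ := (map_evalRingHom_eq_zero_iff Q u).mp <| eq_zero_of_infinite_isRoot _ <|
    hinf.mono fun v hv => (map_evalRingHom_eval u v _).trans <| by
      simpa [derivative_mul] using hv.2.2.1
  obtain ⟨a, b, hab⟩ := hmin.dvd_monomial_of_mul_self_dvd hF (mul_dvd_mul_left _ hQ)
  have := Polynomial.map_dvd (evalRingHom u) hab
  simp [hu] at this

lemma separable_map (hmin : IsMinimalOnTorus F) (hF : F ≠ 0) (hY : ¬Y ∣ F) :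
    (F.map (algebraMap ℂ[X] (FractionRing ℂ[X]))).Separable := by
  rw [PerfectField.separable_iff_squarefree]
  by_contra h
  obtain ⟨π, hπ, hdeg, hππ⟩ := exists_prime_mul_self_dvd_of_not_squarefree_map hF h
  obtain ⟨a, b, hab⟩ := hmin.dvd_monomial_of_mul_self_dvd hF hππ
  rcases hπ.dvd_or_dvd hab with hπX | hπY
  · have := natDegree_le_of_dvd hπX (by simp)
    rw [← C_pow, natDegree_C] at this
    omega
  · exact hY <| (hπ.irreducible.dvd_symm irreducible_X (hπ.dvd_of_dvd_pow hπY)).trans <|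
      (dvd_mul_right _ _).trans hππ

lemma finite_image_fst_singularSet (hmin : IsMinimalOnTorus F) (hF : F ≠ 0) (hY : ¬Y ∣ F) :
    (Prod.fst '' singularSet F).Finite := by
  obtain ⟨a, b, d, hd, hab⟩ := exists_mul_add_mul_derivative_eq_C (hmin.separable_map hF hY)
  refine (finite_setOfPred_isRoot hd).subset ?_
  rintro _ ⟨⟨u, v⟩, ⟨-, hF₀, -, hF₁⟩, rfl⟩
  have := congr_arg (evalEval u v) hab
  rw [evalEval_add, evalEval_mul, evalEval_mul, hF₀, hF₁, evalEval_C] at this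
  simpa using this.symm

lemma finite_singularSet (hmin : IsMinimalOnTorus F) (hF : F ≠ 0) (hY : ¬Y ∣ F) :
    (singularSet F).Finite :=
  Finite.of_finite_fibers Prod.fst (hmin.finite_image_fst_singularSet hF hY) fun u _ =>
    ((hmin.finite_singularSet_fiber hF u).image (Prod.mk u)).subset
      fun w ⟨hw, hwu⟩ => ⟨w.2, by rwa [← hwu], by rw [← hwu]⟩

end IsMinimalOnTorus

lemma STP.differentiable_toFun (p : STP) : Differentiable ℝ p.toFun := by
  unfold STP.toFun
  fun_prop

lemma pderivX_eq_deriv {F : ℝ × ℝ → ℂ} {r : ℝ × ℝ} (hF : DifferentiableAt ℝ F r) :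
    pderivX F r = deriv (fun t => F (t, r.2)) r.1 :=
  (hF.hasFDerivAt.comp_hasDerivAt r.1
    ((hasDerivAt_id r.1).prodMk (hasDerivAt_const r.1 r.2))).deriv.symm

lemma pderivY_eq_deriv {F : ℝ × ℝ → ℂ} {r : ℝ × ℝ} (hF : DifferentiableAt ℝ F r) :
    pderivY F r = deriv (fun t => F (r.1, t)) r.2 :=
  (hF.hasFDerivAt.comp_hasDerivAt r.2
    ((hasDerivAt_const r.2 r.1).prodMk (hasDerivAt_id r.2))).deriv.symm

lemma eval_and_derivative_eval_eq_zero_of_deriv_eq_zero {φ : ℝ → ℂ} {K : ℂ} (hK : K ≠ 0)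
    (c : ℝ) (f : ℂ[X]) (hφ : ∀ s, φ s = K * 𝐞 (c * s) * f.eval (𝐞 s)) {t : ℝ}
    (h₀ : φ t = 0) (h₁ : deriv φ t = 0) :
    f.eval (𝐞 t) = 0 ∧ (derivative f).eval (𝐞 t) = 0 := by
  obtain rfl : φ = fun s => K * 𝐞 (c * s) * f.eval (𝐞 s) := funext hφ
  have hf : f.eval (𝐞 t) = 0 := by simpa [hK, expTwoPiI_ne_zero] using h₀
  have hderiv : HasDerivAt (fun s => K * 𝐞 (c * s) * f.eval (𝐞 s)) _ t :=
    ((hasDerivAt_expTwoPiI_mul c t).const_mul K).mul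
      ((f.hasDerivAt (𝐞 t)).comp t (by simpa using hasDerivAt_expTwoPiI_mul 1 t))
  rw [hderiv.deriv, hf] at h₁
  exact ⟨hf, by simpa [hK, expTwoPiI_ne_zero, Real.pi_ne_zero] using h₁⟩

lemma STP.mem_singularSet {p : STP} {β : ℕ} {F : ℂ[X][Y]} (hpF : p.toPoly = Y ^ β * F)
    {x y : ℝ} (h₀ : p.toFun (x, y) = 0) (hx : pderivX p.toFun (x, y) = 0)
    (hy : pderivY p.toFun (x, y) = 0) : (𝐞 x, 𝐞 y) ∈ singularSet F := by
  set a := p.σ.1 - p.offset₁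
  set b := p.σ.2 - p.offset₂ + β
  have hp (s t : ℝ) : p.toFun (s, t) = 𝐞 (a * s) * 𝐞 (b * t) * F.evalEval (𝐞 s) (𝐞 t) := by
    rw [toFun_eq_evalEval, hpF, evalEval_mul, evalEval_pow, evalEval_X,
      show b * t = (p.σ.2 - p.offset₂) * t + (β : ℤ) * t by rw [Int.cast_natCast]; ring,
      expTwoPiI_add, expTwoPiI_int_mul, zpow_natCast]
    ring
  have hd := p.differentiable_toFun (x, y)
  obtain ⟨hF₀, hFx⟩ := eval_and_derivative_eval_eq_zero_of_deriv_eq_zero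
    (φ := fun s => p.toFun (s, y)) (expTwoPiI_ne_zero (b * y)) a (F.eval (C (𝐞 y)))
    (fun s => by rw [hp, evalEval]; ring) h₀ ((pderivX_eq_deriv hd).symm.trans hx)
  obtain ⟨-, hFy⟩ := eval_and_derivative_eval_eq_zero_of_deriv_eq_zero
    (φ := fun t => p.toFun (x, t)) (expTwoPiI_ne_zero (a * x)) b (F.map (evalRingHom (𝐞 x)))
    (fun t => by rw [hp, map_evalRingHom_eval]) h₀ ((pderivY_eq_deriv hd).symm.trans hy)
  rw [derivative_map, map_evalRingHom_eval] at hFy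
  exact ⟨expTwoPiI_ne_zero x, hF₀, hFx, hFy⟩

theorem stmt15_general (C : Set (ℝ × ℝ)) (p : STP) (hp : IsMinPolyS p C) :
    {r : ℝ × ℝ | r ∈ Set.Ico (0:ℝ) 1 ×ˢ Set.Ico (0:ℝ) 1 ∧ p.toFun r = 0 ∧
      pderivX p.toFun r = 0 ∧ pderivY p.toFun r = 0}.Finite := by
  obtain ⟨hp0, -, rfl, hmin⟩ := hp
  have hP := STP.toPoly_ne_zero hp0
  obtain ⟨F, hPF, hYF⟩ := exists_eq_pow_rootMultiplicity_mul_and_not_dvd p.toPoly hP 0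
  rw [C_0, sub_zero] at hPF hYF
  have hF : F ≠ 0 := by rintro rfl; exact hP (by rw [hPF, mul_zero])
  have hminF : IsMinimalOnTorus F := .of_Y_pow_mul (hPF ▸ STP.isMinimalOnTorus_toPoly hmin)
  refine Finite.of_finite_image ((hminF.finite_singularSet hF hYF).subset ?_)
    ((injOn_expTwoPiI.prodMap injOn_expTwoPiI).mono fun r hr => hr.1)
  rintro _ ⟨r, hr, rfl⟩
  exact STP.mem_singularSet hPF hr.2.1 hr.2.2.1 hr.2.2.2

/-- If `C` is a trigonometric curve with minimal polynomial `μ`, then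
the gradient of `μ` vanishes at only finitely many points of `C` in `[0,1)²`. -/
theorem stmt15 (C : Set (ℝ × ℝ)) (hC : IsTrigCurveS C) (p : STP) (hp : IsMinPolyS p C) :
    {r : ℝ × ℝ | r ∈ Set.Ico (0:ℝ) 1 ×ˢ Set.Ico (0:ℝ) 1 ∧ p.toFun r = 0 ∧
      pderivX p.toFun r = 0 ∧ pderivY p.toFun r = 0}.Finite :=
  stmt15_general C p hp
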